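/- Suppose the interpolation operator I_h satisfies ‖v − I_h v‖_{L²(Ω)} ≤ C h² ‖v‖_{H²(Ω)}, the Ritz map satisfies ‖R_h u − u‖_{L²(Ω)} ≤ C h² ‖u‖₂, and the inverse estimate ‖χ‖_{L^∞} ≤ c h^{−d/2} ‖χ‖_{L²} holds on the finite element space. If moreover ‖I_h v − v‖_{L^∞(Ω)} ≤ C‖v‖_{L^∞(Ω)}, then for d ≤ 4: ‖R_h u‖_{L^∞(Ω_h-norm)} ≤ C'(‖u‖₂ + ‖u‖_{L^∞(Ω)}) with C' independent of h, for all u ∈ H² ∩ L^∞. -/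

import Mathlib

/-!
Insert the interpolant: `R_h u = (R_h u - I_h u) + (I_h u - u) + u`. The middle term is
controlled by the `L^∞` stability of `I_h`. The first is a finite element function whose
`L²` norm is `O(h²)` by the Ritz and interpolation error bounds, so the inverse estimate
costs only a factor `h^{-d/2}`, which `h²` absorbs exactly when `d ≤ 4`.
-/

section Subadditive

variable {X : Type*} [AddCommGroup X] {f : X → ℝ}

lemma le_map_sub_add_of_subadditive (htri : ∀ x y, f (x + y) ≤ f x + f y) (a b : X) :
    f a ≤ f (a - b) + f b := by
  simpa using htri (a - b) b

lemma map_sub_le_add_of_subadditive (htri : ∀ x y, f (x + y) ≤ f x + f y) (a b c : X) :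
    f (a - c) ≤ f (a - b) + f (b - c) := by
  simpa using htri (a - b) (b - c)

end Subadditive

lemma rpow_neg_mul_sq_le_one {h s : ℝ} (hh0 : 0 < h) (hh1 : h ≤ 1) (hs : s ≤ 2) :
    h ^ (-s) * h ^ 2 ≤ 1 := by
  rw [← Real.rpow_natCast, ← Real.rpow_add hh0]
  exact Real.rpow_le_one hh0.le hh1 (by push_cast; linarith)

lemma le_of_inverse_estimate_of_le_sq_mul {h s c K a b z : ℝ} (hh0 : 0 < h) (hh1 : h ≤ 1)
    (hs : s ≤ 2) (hc : 0 ≤ c) (hK : 0 ≤ K) (hz : 0 ≤ z)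
    (hinv : a ≤ c * h ^ (-s) * b) (hb : b ≤ K * h ^ 2 * z) : a ≤ c * K * z :=
  calc a ≤ c * h ^ (-s) * (K * h ^ 2 * z) := hinv.trans (by gcongr)
    _ = c * K * z * (h ^ (-s) * h ^ 2) := by ring
    _ ≤ c * K * z * 1 := by gcongr; exact rpow_neg_mul_sq_le_one hh0 hh1 hs
    _ = c * K * z := mul_one _

theorem stmt_17_general
    {X : Type*} [AddCommGroup X]
    (nL2 nLinf nH2 : X → ℝ)
    (hL2tri : ∀ x y : X, nL2 (x + y) ≤ nL2 x + nL2 y)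
    (hLinftri : ∀ x y : X, nLinf (x + y) ≤ nLinf x + nLinf y)
    (hLinfnn : ∀ x : X, 0 ≤ nLinf x)
    (hH2nn : ∀ x : X, 0 ≤ nH2 x)
    (d : ℕ) (hd : d ≤ 4)
    (S : ℝ → Set X) (Ih Rh : ℝ → X → X)
    (C cinv : ℝ) (hC : 0 < C) (hcinv : 0 < cinv)
    (hIhS : ∀ h : ℝ, ∀ v : X, Ih h v ∈ S h)
    (hRhS : ∀ h : ℝ, ∀ u : X, Rh h u ∈ S h)
    (hSsub : ∀ h : ℝ, ∀ x ∈ S h, ∀ y ∈ S h, x - y ∈ S h)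
    (hinv : ∀ h : ℝ, 0 < h → ∀ χ ∈ S h,
      nLinf χ ≤ cinv * h ^ (-(d : ℝ) / 2) * nL2 χ)
    (hinterpL2 : ∀ h : ℝ, 0 < h → ∀ v : X, nL2 (v - Ih h v) ≤ C * h ^ 2 * nH2 v)
    (hritz : ∀ h : ℝ, 0 < h → ∀ u : X, nL2 (Rh h u - u) ≤ C * h ^ 2 * nH2 u)
    (hinterpLinf : ∀ h : ℝ, 0 < h → ∀ v : X, nLinf (Ih h v - v) ≤ C * nLinf v) :
    ∃ C' : ℝ, 0 < C' ∧ ∀ h : ℝ, 0 < h → h ≤ 1 → ∀ u : X,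
      nLinf (Rh h u) ≤ C' * (nH2 u + nLinf u) := by
  refine ⟨cinv * (2 * C) + C + 1, by positivity, fun h hh0 hh1 u => ?_⟩
  have hL2 : nL2 (Rh h u - Ih h u) ≤ 2 * C * h ^ 2 * nH2 u := by
    linarith [map_sub_le_add_of_subadditive hL2tri (Rh h u) u (Ih h u),
      hritz h hh0 u, hinterpL2 h hh0 u]
  have hLinf : nLinf (Rh h u - Ih h u) ≤ cinv * (2 * C) * nH2 u := by
    refine le_of_inverse_estimate_of_le_sq_mul hh0 hh1 (s := d / 2)
      (by linarith [show (d : ℝ) ≤ 4 by exact_mod_cast hd])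
      hcinv.le (by positivity) (hH2nn u) ?_ hL2
    simpa only [neg_div] using hinv h hh0 _ (hSsub h _ (hRhS h u) _ (hIhS h u))
  have hsplit : nLinf (Rh h u) ≤ nLinf (Rh h u - Ih h u) + nLinf (Ih h u - u) + nLinf u :=
    (le_map_sub_add_of_subadditive hLinftri (Rh h u) u).trans
      (by gcongr; exact map_sub_le_add_of_subadditive hLinftri _ _ _)
  nlinarith [hinterpLinf h hh0 u, hLinfnn u, hH2nn u, mul_pos hcinv hC]

/-- Uniform `L^∞` bound on the Ritz map: combining the `L²` interpolation and Ritz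
error bounds, the inverse estimate `‖χ‖_{L^∞} ≤ c h^{−d/2} ‖χ‖_{L²}` on the finite
element space, and the `L^∞` interpolation bound, one gets for `d ≤ 4` and `h ≤ 1`
that `‖R_h u‖_{L^∞} ≤ C'(‖u‖₂ + ‖u‖_{L^∞})` with `C'` independent of `h`. -/
theorem stmt_17
    {X : Type*} [AddCommGroup X]
    (nL2 nLinf nH2 : X → ℝ)
    (hL2tri : ∀ x y : X, nL2 (x + y) ≤ nL2 x + nL2 y)
    (hL2neg : ∀ x : X, nL2 (-x) = nL2 x)
    (hLinftri : ∀ x y : X, nLinf (x + y) ≤ nLinf x + nLinf y)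
    (hLinfneg : ∀ x : X, nLinf (-x) = nLinf x)
    (hL2nn : ∀ x : X, 0 ≤ nL2 x) (hLinfnn : ∀ x : X, 0 ≤ nLinf x)
    (hH2nn : ∀ x : X, 0 ≤ nH2 x)
    (d : ℕ) (hd : d ≤ 4)
    (S : ℝ → Set X) (Ih Rh : ℝ → X → X)
    (C cinv : ℝ) (hC : 0 < C) (hcinv : 0 < cinv)
    (hIhS : ∀ h : ℝ, ∀ v : X, Ih h v ∈ S h)
    (hRhS : ∀ h : ℝ, ∀ u : X, Rh h u ∈ S h)
    (hSsub : ∀ h : ℝ, ∀ x ∈ S h, ∀ y ∈ S h, x - y ∈ S h)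
    (hinv : ∀ h : ℝ, 0 < h → ∀ χ ∈ S h,
      nLinf χ ≤ cinv * h ^ (-(d : ℝ) / 2) * nL2 χ)
    (hinterpL2 : ∀ h : ℝ, 0 < h → ∀ v : X, nL2 (v - Ih h v) ≤ C * h ^ 2 * nH2 v)
    (hritz : ∀ h : ℝ, 0 < h → ∀ u : X, nL2 (Rh h u - u) ≤ C * h ^ 2 * nH2 u)
    (hinterpLinf : ∀ h : ℝ, 0 < h → ∀ v : X, nLinf (Ih h v - v) ≤ C * nLinf v) :
    ∃ C' : ℝ, 0 < C' ∧ ∀ h : ℝ, 0 < h → h ≤ 1 → ∀ u : X,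
      nLinf (Rh h u) ≤ C' * (nH2 u + nLinf u) :=
  stmt_17_general nL2 nLinf nH2 hL2tri hLinftri hLinfnn hH2nn d hd S Ih Rh C cinv hC hcinv hIhS hRhS
    hSsub hinv hinterpL2 hritz hinterpLinf
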